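/- arXiv:1608.06145 — 2 statements merged into one kernel-verified Lean document; each statement's English description precedes it below -/
import Mathlib

section
/- Every Hermitian matrix ρ of order N with Tr(ρ) = 1 satisfying Tr((ρ − (1/N)I)²) ≤ 1/(N(N²−1)) is positive semidefinite (i.e., all points of the ball of radius (1/(N²−1))√((N−1)/N) around the normalized identity are density matrices). -/
open Matrix BigOperators
open scoped ComplexOrder

lemma key_eigen_lemma (N : ℕ) (hN : 0 < N) (lam : Fin N → ℝ)
    (hsum : ∑ i, lam i = 1)
    (hq : ∑ i, (lam i - 1 / N) ^ 2 ≤ 1 / ((N : ℝ) * ((N : ℝ) ^ 2 - 1))) :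
    ∀ k, 0 ≤ lam k := by
  intro k
  rcases eq_or_lt_of_le (Nat.one_le_iff_ne_zero.mpr hN.ne') with h1 | h2
  · -- N = 1
    have hN1 : N = 1 := h1.symm
    subst hN1
    have : lam k = 1 := by
      rw [← hsum]
      simp [Fin.sum_univ_one, Subsingleton.elim k 0]
    linarith
  · -- N ≥ 2
    have hN2 : (2 : ℕ) ≤ N := h2
    have hn2 : (2 : ℝ) ≤ (N : ℝ) := by exact_mod_cast hN2
    set n : ℝ := (N : ℝ) with hn
    have hn0 : (0 : ℝ) < n := by linarith
    set μ : Fin N → ℝ := fun i => lam i - 1 / n with hμ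
    have hμsum : ∑ i, μ i = 0 := by
      simp only [hμ, Finset.sum_sub_distrib, hsum, Finset.sum_const, Finset.card_univ,
        Fintype.card_fin, nsmul_eq_mul]
      field_simp
      rw [hn]; ring
    set s : Finset (Fin N) := Finset.univ.erase k with hs
    have hcard : (s.card : ℝ) = n - 1 := by
      rw [hs, Finset.card_erase_of_mem (Finset.mem_univ k)]
      simp only [Finset.card_univ, Fintype.card_fin]
      rw [Nat.cast_sub hN, Nat.cast_one]
    have hsums : ∑ i ∈ s, μ i = -μ k := by
      rw [hs, Finset.sum_erase_eq_sub (Finset.mem_univ k), hμsum]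
      ring
    have hsumsq : ∑ i ∈ s, (μ i) ^ 2 = (∑ i, (μ i) ^ 2) - (μ k) ^ 2 := by
      rw [hs, Finset.sum_erase_eq_sub (Finset.mem_univ k)]
    have hcs : (∑ i ∈ s, μ i) ^ 2 ≤ (s.card : ℝ) * ∑ i ∈ s, (μ i) ^ 2 := by
      exact_mod_cast sq_sum_le_card_mul_sum_sq (s := s) (f := μ)
    rw [hsums, hcard, hsumsq, neg_sq] at hcs
    set S : ℝ := ∑ i, (μ i) ^ 2 with hS
    have hq' : S ≤ 1 / (n * (n ^ 2 - 1)) := hq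
    have hd : (0 : ℝ) < n * (n ^ 2 - 1) := by nlinarith
    have hA : n * (μ k) ^ 2 ≤ (n - 1) * S := by nlinarith [hcs]
    have hB : (n - 1) * S ≤ (n - 1) * (1 / (n * (n ^ 2 - 1))) :=
      mul_le_mul_of_nonneg_left hq' (by linarith)
    have h2eq : (n - 1) * (1 / (n * (n ^ 2 - 1))) = 1 / (n * (n + 1)) := by
      have hne : n ^ 2 - 1 ≠ 0 := (by nlinarith : (0:ℝ) < n ^ 2 - 1).ne'
      field_simp
      ring
    have h1 : n * (μ k) ^ 2 ≤ 1 / (n * (n + 1)) := by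
      rw [← h2eq]; exact hA.trans hB
    have h3 : n * (μ k) ^ 2 * (n * (n + 1)) ≤ 1 :=
      (le_div_iff₀ (by positivity : (0:ℝ) < n * (n + 1))).mp h1
    have hμk2 : (μ k) ^ 2 ≤ 1 / n ^ 2 := by
      rw [le_div_iff₀ (by positivity : (0:ℝ) < n ^ 2)]
      nlinarith [sq_nonneg (μ k), hn0]
    have hμk2' : (μ k) ^ 2 ≤ (1 / n) ^ 2 := by
      rw [div_pow, one_pow]; exact hμk2
    have : -(1 / n) ≤ μ k := (abs_le_of_sq_le_sq' hμk2' (by positivity)).1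
    have hlam : lam k = μ k + 1 / n := by simp [hμ]
    linarith

/-- Every Hermitian matrix ρ of order N with Tr(ρ) = 1 satisfying
Tr((ρ − (1/N)I)²) ≤ 1/(N(N²−1)) is positive semidefinite: the ball of radius
(1/(N²−1))√((N−1)/N) around the normalized identity consists of density matrices. -/
theorem inball_of_normalized_identity_is_density (N : ℕ) (hN : 0 < N)
    (ρ : Matrix (Fin N) (Fin N) ℂ) (hherm : ρ.IsHermitian) (htr : ρ.trace = 1)
    (hball : (Matrix.trace ((ρ - (N : ℂ)⁻¹ • 1) * (ρ - (N : ℂ)⁻¹ • 1))).re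
      ≤ 1 / ((N : ℝ) * ((N : ℝ) ^ 2 - 1))) :
    ρ.PosSemidef := by
  set U : Matrix (Fin N) (Fin N) ℂ := (hherm.eigenvectorUnitary : Matrix (Fin N) (Fin N) ℂ) with hU
  have hUU : U * star U = 1 := (Matrix.mem_unitaryGroup_iff).mp hherm.eigenvectorUnitary.2
  have hUU' : star U * U = 1 := (Matrix.mem_unitaryGroup_iff').mp hherm.eigenvectorUnitary.2
  set lam := hherm.eigenvalues with hlam
  set D : Matrix (Fin N) (Fin N) ℂ := Matrix.diagonal (RCLike.ofReal ∘ lam) with hD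
  have hspec : ρ = U * D * star U := hherm.spectral_theorem
  -- trace of ρ is sum of eigenvalues
  have htrD : ρ.trace = D.trace := by
    rw [hspec, Matrix.trace_mul_cycle, hUU', Matrix.one_mul]
  have hsum : ∑ i, lam i = 1 := by
    have hDt : D.trace = (∑ i, (lam i : ℂ)) := by
      simp [hD, Matrix.trace_diagonal]
    rw [htr] at htrD
    have h1 : (∑ i, (lam i : ℂ)) = 1 := by rw [← hDt, ← htrD]
    have h2 := congrArg Complex.re h1
    simpa [Complex.re_sum] using h2
  -- the difference
  have hdiff : ρ - (N : ℂ)⁻¹ • 1 = U * (D - (N : ℂ)⁻¹ • 1) * star U := by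
    rw [Matrix.mul_sub, Matrix.sub_mul, ← hspec]
    congr 1
    rw [Matrix.mul_smul, Matrix.mul_one, Matrix.smul_mul, hUU]
  have hDdiag : D - (N : ℂ)⁻¹ • 1 = Matrix.diagonal (fun i => (lam i : ℂ) - (N : ℂ)⁻¹) := by
    ext i j
    rcases eq_or_ne i j with h | h <;>
      simp [hD, Matrix.sub_apply, Matrix.smul_apply, Matrix.one_apply, Matrix.diagonal_apply, h]
  set E : Matrix (Fin N) (Fin N) ℂ := D - (N : ℂ)⁻¹ • 1 with hE
  have hconj : (U * E * star U * (U * E * star U)).trace = (E * E).trace := by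
    have h1 : U * E * star U * (U * E * star U) = U * (E * (E * star U)) := by
      simp only [Matrix.mul_assoc]
      rw [← Matrix.mul_assoc (star U) U, hUU', Matrix.one_mul]
    rw [h1, Matrix.trace_mul_comm]
    simp only [Matrix.mul_assoc]
    rw [hUU', Matrix.mul_one]
  have htr2 : (Matrix.trace ((ρ - (N : ℂ)⁻¹ • 1) * (ρ - (N : ℂ)⁻¹ • 1))).re
      = ∑ i, (lam i - 1 / N) ^ 2 := by
    rw [hdiff, hconj, hDdiag, Matrix.diagonal_mul_diagonal, Matrix.trace_diagonal,
      Complex.re_sum]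
    apply Finset.sum_congr rfl
    intro i _
    have hcast : ((lam i : ℂ) - (N : ℂ)⁻¹) * ((lam i : ℂ) - (N : ℂ)⁻¹)
        = ((lam i - 1 / (N : ℝ) : ℝ) : ℂ) * ((lam i - 1 / (N : ℝ) : ℝ) : ℂ) := by
      push_cast
      ring
    rw [hcast, ← Complex.ofReal_mul]
    simp [sq]
  rw [htr2] at hball
  exact hherm.posSemidef_iff_eigenvalues_nonneg.mpr (key_eigen_lemma N hN lam hsum hball)
end

section
/- For the mixture ρ = p|GHZ⟩⟨GHZ| + ((1−p)/8)I₈ of the three-qubit GHZ state with the maximally mixed state, the partial transpose across the bipartition {first qubit}/{last two qubits} is positive semidefinite if and only if p ≤ 1/5. -/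
open Matrix BigOperators
open scoped ComplexOrder

/-- The three-qubit GHZ state (|000⟩+|111⟩)/√2 as a vector. -/
noncomputable def ghzVec : Fin 2 × Fin 2 × Fin 2 → ℂ := fun x =>
  if (x.1 = 0 ∧ x.2.1 = 0 ∧ x.2.2 = 0) ∨ (x.1 = 1 ∧ x.2.1 = 1 ∧ x.2.2 = 1)
    then (((Real.sqrt 2)⁻¹ : ℝ) : ℂ) else 0

/-- The projection |GHZ⟩⟨GHZ|. -/
noncomputable def ghzProj : Matrix (Fin 2 × Fin 2 × Fin 2) (Fin 2 × Fin 2 × Fin 2) ℂ :=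
  Matrix.vecMulVec ghzVec (star ghzVec)

/-- Partial transpose on the first qubit. -/
def ptFirst (ρ : Matrix (Fin 2 × Fin 2 × Fin 2) (Fin 2 × Fin 2 × Fin 2) ℂ) :
    Matrix (Fin 2 × Fin 2 × Fin 2) (Fin 2 × Fin 2 × Fin 2) ℂ :=
  Matrix.of fun x y => ρ (y.1, x.2) (x.1, y.2)

lemma aux_sqrt : (((Real.sqrt 2)⁻¹ : ℝ) : ℂ) * (((Real.sqrt 2)⁻¹ : ℝ) : ℂ) = ((1/2 : ℝ) : ℂ) := by
  rw [← Complex.ofReal_mul, ← mul_inv, Real.mul_self_sqrt (by norm_num)]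
  norm_num

lemma aux_sqrt2 : ((Real.sqrt 2 : ℝ) : ℂ)⁻¹ ^ 2 = 1/2 := by
  rw [← Complex.ofReal_inv, ← Complex.ofReal_pow, inv_pow, Real.sq_sqrt (by norm_num : (0:ℝ) ≤ 2)]
  norm_num

lemma aux_sqrt3 : ((Real.sqrt 2 : ℝ) : ℂ)⁻¹ * ((Real.sqrt 2 : ℝ) : ℂ)⁻¹ = 1/2 := by
  rw [← sq, aux_sqrt2]

lemma star_ghz (x : Fin 2 × Fin 2 × Fin 2) : star (ghzVec x) = ghzVec x := by
  unfold ghzVec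
  split_ifs <;> simp [Complex.star_def, Complex.conj_ofReal]

def wVec : Fin 2 × Fin 2 × Fin 2 → ℂ := fun x =>
  if x = (0,1,1) ∨ x = (1,0,0) then 1 else 0

lemma psd_smul_real {n : Type*} [Fintype n] {M : Matrix n n ℂ} (hM : M.PosSemidef)
    {r : ℝ} (hr : 0 ≤ r) : (((r : ℂ)) • M).PosSemidef := by
  refine PosSemidef.of_dotProduct_mulVec_nonneg ?_ ?_
  · unfold Matrix.IsHermitian
    rw [conjTranspose_smul, hM.1]
    congr 1
    simp
  · intro x
    rw [smul_mulVec, dotProduct_smul]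
    exact mul_nonneg (by exact_mod_cast Complex.zero_le_real.2 hr) (hM.dotProduct_mulVec_nonneg x)

lemma psd_vmv {n : Type*} [Fintype n] (v : n → ℂ) :
    (Matrix.vecMulVec v (star v)).PosSemidef := by
  rw [Matrix.vecMulVec_eq Unit]
  have : Matrix.replicateRow Unit (star v) = (Matrix.replicateCol Unit v)ᴴ := by
    ext i j; simp [Matrix.replicateRow, Matrix.replicateCol]
  rw [this]
  exact Matrix.posSemidef_self_mul_conjTranspose _

set_option maxHeartbeats 1000000 in
/-- The mixture ρ = p|GHZ⟩⟨GHZ| + ((1−p)/8)I₈ has positive partial transpose across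
the bipartition {first qubit}/{last two qubits} iff p ≤ 1/5. -/
theorem ghz_werner_ppt_iff (p : ℝ) (hp0 : 0 ≤ p) (hp1 : p ≤ 1) :
    (ptFirst ((p : ℂ) • ghzProj + (((1 - p) / 8 : ℝ) : ℂ) •
        (1 : Matrix (Fin 2 × Fin 2 × Fin 2) (Fin 2 × Fin 2 × Fin 2) ℂ))).PosSemidef
      ↔ p ≤ 1 / 5 := by
  constructor
  · intro h
    have := h.dotProduct_mulVec_nonneg (fun x => if x = (0,1,1) then 1 else if x = (1,0,0) then -1 else 0)
    have hval : (star (fun x => if x = ((0:Fin 2),(1:Fin 2),(1:Fin 2)) then (1:ℂ) else if x = (1,0,0) then -1 else 0) ⬝ᵥ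
        (ptFirst ((p : ℂ) • ghzProj + (((1 - p) / 8 : ℝ) : ℂ) •
        (1 : Matrix (Fin 2 × Fin 2 × Fin 2) (Fin 2 × Fin 2 × Fin 2) ℂ))) *ᵥ
        (fun x => if x = (0,1,1) then 1 else if x = (1,0,0) then -1 else 0))
        = (((1 - 5*p)/4 : ℝ) : ℂ) := by
      simp only [dotProduct, Matrix.mulVec, Fintype.sum_prod_type, Fin.sum_univ_two,
        ptFirst, ghzProj, ghzVec, Matrix.vecMulVec_apply, Matrix.one_apply, Matrix.of_apply,
        Matrix.add_apply, Matrix.smul_apply, Pi.star_apply, Prod.mk.injEq]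
      norm_num
      rw [aux_sqrt3]
      push_cast
      ring
    rw [hval, Complex.zero_le_real] at this
    linarith
  · intro hp
    have hdec : (ptFirst ((p : ℂ) • ghzProj + (((1 - p) / 8 : ℝ) : ℂ) •
        (1 : Matrix (Fin 2 × Fin 2 × Fin 2) (Fin 2 × Fin 2 × Fin 2) ℂ)))
      = Matrix.diagonal (fun x =>
          if x = ((0:Fin 2),(1:Fin 2),(1:Fin 2)) ∨ x = (1,0,0) then (((1 - 5*p)/8 : ℝ) : ℂ)
          else if x = (0,0,0) ∨ x = (1,1,1) then (((1 + 3*p)/8 : ℝ) : ℂ)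
          else (((1 - p)/8 : ℝ) : ℂ))
        + ((p/2 : ℝ) : ℂ) • Matrix.vecMulVec wVec (star wVec) := by
      ext ⟨a, b, c⟩ ⟨x, y, z⟩
      simp only [ptFirst, ghzProj, wVec, Matrix.vecMulVec_apply, Matrix.of_apply,
        Matrix.add_apply, Matrix.smul_apply, Matrix.one_apply, Matrix.diagonal_apply,
        Pi.star_apply, star_ghz, ghzVec]
      fin_cases a <;> fin_cases b <;> fin_cases c <;> fin_cases x <;> fin_cases y <;> fin_cases z <;>
        norm_num [aux_sqrt2, Prod.ext_iff] <;> push_cast [aux_sqrt2] <;> ring_nf <;> rw [aux_sqrt2] <;> ring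
    rw [hdec]
    refine Matrix.PosSemidef.add (Matrix.PosSemidef.diagonal ?_) (psd_smul_real (psd_vmv _) (by linarith))
    rw [Pi.le_def]
    intro i
    simp only [Pi.zero_apply]
    split_ifs <;> rw [Complex.zero_le_real] <;> linarith
end
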